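/- arXiv:0805.3080 — 3 statements merged into one kernel-verified Lean document; each statement's English description precedes it below -/
import Mathlib

section
/- Let m1, m2, n be positive integers with gcd(m1,n) = gcd(m2,n) = 1 and n ≥ 2, and let r, (b_l), (r_l), L and (μ_l) be the Hirzebruch–Jung data of (m1,m2,n). Then m1 + r·m2 is divisible by n (so μ_1 = (m1 + r·m2)/n is a positive integer), every term μ_0, μ_1, …, μ_{L+1} of the multiplicity sequence is a positive integer, and the final term satisfies μ_{L+1} = m1. -/
/-!
The quantity `W_k = r_{k-1} μ_{k+1} - r_k μ_k` is invariant under the two recursions (they share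
the coefficients `b_l`), and `W_0 = n μ_1 - r m2 = m1`. Since the remainders are positive
before `r_L = 0`, the invariant forces every `μ_l` to be positive. The Euclidean step also preserves
`gcd(r_{k-1}, r_k)`, so `r_{L-1} = gcd(n, r)` divides `n`; reading the invariant at the last
step, where `r_L = 0`, gives `r_{L-1} μ_{L+1} = m1`, hence `r_{L-1} = 1` and `μ_{L+1} = m1`.
-/

/-- The Hirzebruch–Jung data of a triple `(m1, m2, n)` of positive integers with
`gcd m1 n = gcd m2 n = 1` and `n ≥ 2`.  Our indexing of the remainder sequence is
shifted by one: `r k` denotes the remainder `r_{k-1}` of the paper, so `r 0 = n`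
(that is, `r_{-1} = n`), `r 1` is the unique integer `r` with `0 < r < n` and
`m1 + r * m2 ≡ 0 (mod n)`, and the Jung–Hirzebruch recursion
`r_{l+1} = b_{l+1} * r_l - r_{l-1}` with `b_{l+1} = ⌈r_{l-1} / r_l⌉` reads
`r (l+1) = b l * r l - r (l-1)` for `1 ≤ l ≤ L`.  `L` is the least index with
`r_L = 0`, i.e. `r (L+1) = 0` and all earlier terms are positive.  The multiplicity
sequence is indexed without shift: `μ 0 = m2`, `μ 1 = (m1 + r * m2) / n` and
`μ (l+1) = b l * μ l - μ (l-1)` for `1 ≤ l ≤ L`. -/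
structure HJData (m1 m2 n : ℕ) : Type where
  r : ℕ → ℤ
  b : ℕ → ℤ
  L : ℕ
  μ : ℕ → ℤ
  r_zero : r 0 = (n : ℤ)
  r_one_pos : 0 < r 1
  r_one_lt : r 1 < (n : ℤ)
  r_one_cong : (n : ℤ) ∣ ((m1 : ℤ) + r 1 * (m2 : ℤ))
  r_pos : ∀ k : ℕ, 1 ≤ k → k ≤ L → 0 < r k
  r_top : r (L + 1) = 0
  b_def : ∀ l : ℕ, 1 ≤ l → l ≤ L → b l = ⌈(r (l - 1) : ℚ) / (r l : ℚ)⌉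
  r_rec : ∀ l : ℕ, 1 ≤ l → l ≤ L → r (l + 1) = b l * r l - r (l - 1)
  mu_zero : μ 0 = (m2 : ℤ)
  mu_one : (n : ℤ) * μ 1 = (m1 : ℤ) + r 1 * (m2 : ℤ)
  mu_rec : ∀ l : ℕ, 1 ≤ l → l ≤ L → μ (l + 1) = b l * μ l - μ (l - 1)

namespace HJData

variable {m1 m2 n : ℕ} (hj : HJData m1 m2 n)

theorem r_pos_of_le {k : ℕ} (hk : k ≤ hj.L) : 0 < hj.r k := by
  rcases Nat.eq_zero_or_pos k with rfl | hk0
  · rw [hj.r_zero]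
    exact hj.r_one_pos.trans hj.r_one_lt
  · exact hj.r_pos k hk0 hk

theorem r_nonneg_of_le {k : ℕ} (hk : k ≤ hj.L + 1) : 0 ≤ hj.r k := by
  rcases Nat.lt_or_eq_of_le hk with hk | rfl
  · exact (hj.r_pos_of_le (Nat.le_of_lt_succ hk)).le
  · exact hj.r_top.ge

theorem wronskian {k : ℕ} (hk : k ≤ hj.L) :
    hj.r k * hj.μ (k + 1) - hj.r (k + 1) * hj.μ k = m1 := by
  induction k with
  | zero => rw [hj.r_zero, hj.mu_zero, hj.mu_one]; ring
  | succ k ih =>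
    have hr := hj.r_rec (k + 1) (by omega) hk
    have hμ := hj.mu_rec (k + 1) (by omega) hk
    rw [Nat.add_sub_cancel] at hr hμ
    rw [hr, hμ]
    linear_combination ih (by omega)

theorem mu_pos (hm1 : 0 < m1) (hm2 : 0 < m2) {l : ℕ} (hl : l ≤ hj.L + 1) : 0 < hj.μ l := by
  induction l with
  | zero => rw [hj.mu_zero]; exact_mod_cast hm2
  | succ k ih =>
    have hprod : 0 < hj.r k * hj.μ (k + 1) := by
      have hm1' : (0 : ℤ) < m1 := by exact_mod_cast hm1
      linarith [hj.wronskian (k := k) (by omega),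
        mul_nonneg (hj.r_nonneg_of_le hl) (ih (by omega)).le]
    exact pos_of_mul_pos_right hprod (hj.r_pos_of_le (k := k) (by omega)).le

theorem gcd_r_succ {k : ℕ} (hk : k ≤ hj.L) :
    Int.gcd (hj.r k) (hj.r (k + 1)) = Int.gcd n (hj.r 1) := by
  induction k with
  | zero => rw [hj.r_zero]
  | succ k ih =>
    have hr := hj.r_rec (k + 1) (by omega) hk
    rw [Nat.add_sub_cancel] at hr
    rw [hr, Int.gcd_mul_right_sub_right, Int.gcd_comm, ih (by omega)]

theorem r_last_dvd : hj.r hj.L ∣ n := by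
  have h := hj.gcd_r_succ le_rfl
  rw [hj.r_top, Int.gcd_zero_right] at h
  rw [← Int.natAbs_dvd, h]
  exact Int.gcd_dvd_left _ _

theorem r_last_mul_mu_last : hj.r hj.L * hj.μ (hj.L + 1) = m1 := by
  simpa [hj.r_top] using hj.wronskian le_rfl

theorem r_last_eq_one (h1 : Nat.Coprime m1 n) : hj.r hj.L = 1 := by
  have hunit : IsUnit (hj.r hj.L) :=
    Int.isCoprime_iff_gcd_eq_one.mpr (by exact_mod_cast h1)
      |>.isUnit_of_dvd' (Dvd.intro _ hj.r_last_mul_mu_last) hj.r_last_dvd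
  exact Int.eq_one_of_dvd_one (hj.r_pos_of_le le_rfl).le (isUnit_iff_dvd_one.mp hunit)

theorem mu_last (h1 : Nat.Coprime m1 n) : hj.μ (hj.L + 1) = m1 := by
  simpa [hj.r_last_eq_one h1] using hj.r_last_mul_mu_last

end HJData

theorem stmt3_general (m1 m2 n : ℕ) (hm1 : 0 < m1) (hm2 : 0 < m2)
    (h1 : Nat.Coprime m1 n) (hj : HJData m1 m2 n) :
    (n : ℤ) ∣ ((m1 : ℤ) + hj.r 1 * (m2 : ℤ)) ∧
    0 < hj.μ 1 ∧
    (∀ l : ℕ, l ≤ hj.L + 1 → 0 < hj.μ l) ∧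
    hj.μ (hj.L + 1) = (m1 : ℤ) :=
  ⟨hj.r_one_cong, hj.mu_pos hm1 hm2 (by omega), fun _ hl => hj.mu_pos hm1 hm2 hl,
    hj.mu_last h1⟩

/-- `n` divides `m1 + r * m2` (so `μ_1 = (m1 + r*m2)/n` is a
positive integer), every term `μ_0, …, μ_{L+1}` of the multiplicity sequence is
a positive integer, and `μ_{L+1} = m1`. -/
theorem stmt3 (m1 m2 n : ℕ) (hm1 : 0 < m1) (hm2 : 0 < m2) (hn : 2 ≤ n)
    (h1 : Nat.Coprime m1 n) (h2 : Nat.Coprime m2 n) (hj : HJData m1 m2 n) :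
    (n : ℤ) ∣ ((m1 : ℤ) + hj.r 1 * (m2 : ℤ)) ∧
    0 < hj.μ 1 ∧
    (∀ l : ℕ, l ≤ hj.L + 1 → 0 < hj.μ l) ∧
    hj.μ (hj.L + 1) = (m1 : ℤ) :=
  stmt3_general m1 m2 n hm1 hm2 h1 hj
end

section
/- Let m1 = 3 and m2 = 4. For every integer k ≥ 1, set n = 5 + 12k (so gcd(m1,n) = gcd(m2,n) = 1), and let r, (b_l), (r_l), L and (μ_l) be the Hirzebruch–Jung data of (3,4,n). Then L = k + 3 and the multiplicity sequence is μ_0 = 4, μ_1 = 3, μ_2 = 2, μ_l = 1 for 3 ≤ l ≤ k + 2, μ_{k+3} = 2, and μ_{k+4} = 3. -/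
theorem Int.ceil_intCast_div_eq_of_sub_lt {x y b : ℤ} (h₀ : 0 ≤ b * y - x) (h₁ : b * y - x < y) :
    ⌈(x : ℚ) / y⌉ = b := by
  have h₀' : (0 : ℚ) ≤ b * y - x := by exact_mod_cast h₀
  have h₁' : (b * y - x : ℚ) < y := by exact_mod_cast h₁
  have hy : (0 : ℚ) < y := by linarith
  rw [Int.ceil_eq_iff, lt_div_iff₀ hy, div_le_iff₀ hy]
  constructor <;> linarith

theorem eq_of_two_step_recurrence {f g : ℕ → ℤ} (step : ℕ → ℤ → ℤ → ℤ) {N : ℕ}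
    (h₀ : f 0 = g 0) (h₁ : f 1 = g 1)
    (hf : ∀ l < N, f (l + 2) = step l (f l) (f (l + 1)))
    (hg : ∀ l < N, g (l + 2) = step l (g l) (g (l + 1))) :
    ∀ l ≤ N + 1, f l = g l := by
  have key : ∀ l ≤ N, f l = g l ∧ f (l + 1) = g (l + 1) := by
    intro l hl
    induction l with
    | zero => exact ⟨h₀, h₁⟩
    | succ l ih =>
      obtain ⟨hl₀, hl₁⟩ := ih (by omega)
      exact ⟨hl₁, by rw [hf l hl, hg l hl, hl₀, hl₁]⟩
  intro l hl
  rcases l with _ | l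
  · exact h₀
  · exact (key l (by omega)).2

namespace HJData

variable {m1 m2 n : ℕ} (hj : HJData m1 m2 n)

theorem b_succ {l : ℕ} (hl : l < hj.L) :
    hj.b (l + 1) = ⌈(hj.r l : ℚ) / hj.r (l + 1)⌉ :=
  hj.b_def (l + 1) (by omega) hl

theorem r_add_two {l : ℕ} (hl : l < hj.L) :
    hj.r (l + 2) = ⌈(hj.r l : ℚ) / hj.r (l + 1)⌉ * hj.r (l + 1) - hj.r l := by
  rw [← hj.b_succ hl]
  exact hj.r_rec (l + 1) (by omega) hl

theorem mu_add_two {l : ℕ} (hl : l < hj.L) :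
    hj.μ (l + 2) = hj.b (l + 1) * hj.μ (l + 1) - hj.μ l :=
  hj.mu_rec (l + 1) (by omega) hl

theorem r_one_eq_of_dvd (hcop : IsCoprime (m2 : ℤ) n) {s : ℤ} (hs₀ : 0 < s) (hsn : s < n)
    (hdvd : (n : ℤ) ∣ m1 + s * m2) : hj.r 1 = s := by
  have hmul : (n : ℤ) ∣ m2 * (hj.r 1 - s) :=
    (dvd_sub hj.r_one_cong hdvd).trans ⟨1, by ring⟩
  have hdiff := Int.eq_zero_of_abs_lt_dvd (hcop.symm.dvd_of_dvd_mul_left hmul)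
    (abs_sub_lt_iff.2 ⟨by linarith [hj.r_one_lt], by linarith [hj.r_one_pos]⟩)
  omega

theorem mu_one_eq_of_mul_eq (hn : n ≠ 0) {t : ℤ} (ht : (n : ℤ) * t = m1 + hj.r 1 * m2) :
    hj.μ 1 = t :=
  mul_left_cancel₀ (by exact_mod_cast hn) (hj.mu_one.trans ht.symm)

/-- `0 ≤ R (l + 2) < R (l + 1)` forces `B (l + 1) = ⌈R l / R (l + 1)⌉`, so `R` is the remainder
sequence of `hj` and `B` its sequence of `b`'s. -/
theorem L_eq_and_b_eq_of_chain {N : ℕ} {R B : ℕ → ℤ} (hR₀ : R 0 = n) (hR₁ : R 1 = hj.r 1)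
    (hrec : ∀ l < N, R (l + 2) = B (l + 1) * R (l + 1) - R l)
    (hnonneg : ∀ l < N, 0 ≤ R (l + 2)) (hlt : ∀ l < N, R (l + 2) < R (l + 1))
    (htop : R (N + 1) = 0) :
    hj.L = N ∧ ∀ l < N, hj.b (l + 1) = B (l + 1) := by
  have hceil : ∀ l < N, B (l + 1) = ⌈(R l : ℚ) / R (l + 1)⌉ := fun l hl =>
    (Int.ceil_intCast_div_eq_of_sub_lt (by linarith [hrec l hl, hnonneg l hl])
      (by linarith [hrec l hl, hlt l hl])).symm
  have hagree : ∀ l ≤ min N hj.L + 1, hj.r l = R l :=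
    eq_of_two_step_recurrence (fun _ x y => ⌈(x : ℚ) / y⌉ * y - x)
      (hj.r_zero.trans hR₀.symm) hR₁.symm
      (fun _ _ => hj.r_add_two (by omega))
      (fun l hl => by rw [hrec l (by omega), hceil l (by omega)])
  have hL : hj.L = N := by
    rcases lt_trichotomy hj.L N with h | h | h
    · linarith [hagree (hj.L + 1) (by omega), hj.r_top, hlt hj.L h, hnonneg hj.L h]
    · exact h
    · linarith [hagree (N + 1) (by omega), htop, hj.r_pos (N + 1) (by omega) (by omega)]
  refine ⟨hL, fun l hl => ?_⟩
  rw [hj.b_succ (by omega), hagree l (by omega), hagree (l + 1) (by omega), hceil l hl]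

theorem mu_eq_of_rec {N : ℕ} (hL : hj.L = N) {B M : ℕ → ℤ}
    (hb : ∀ l < N, hj.b (l + 1) = B (l + 1)) (hM₀ : M 0 = m2) (hM₁ : M 1 = hj.μ 1)
    (hrec : ∀ l < N, M (l + 2) = B (l + 1) * M (l + 1) - M l) :
    ∀ l ≤ N + 1, hj.μ l = M l :=
  eq_of_two_step_recurrence (fun l x y => B (l + 1) * y - x)
    (hj.mu_zero.trans hM₀.symm) hM₁.symm
    (fun l hl => by rw [hj.mu_add_two (by omega), hb l hl]) hrec

end HJData

namespace HJData.ThreeFour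

/-! The remainders, `b`'s and multiplicities of `(3, 4, 12k + 5)` for `k ≥ 1`, indexed as in
`HJData`; `quot k 0` is a dummy value. -/

def rem (k : ℕ) : ℕ → ℤ
  | 0 => 12 * k + 5
  | 1 => 9 * k + 3
  | 2 => 6 * k + 1
  | l + 3 => if l < k then 3 * (k - l) - 1 else if l = k then 1 else 0

def quot (k : ℕ) : ℕ → ℤ
  | 0 => 0
  | 1 => 2
  | 2 => 2
  | 3 => if k = 1 then 4 else 3
  | l + 4 => if l + 2 = k then 3 else 2

def mult (k : ℕ) : ℕ → ℤ
  | 0 => 4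
  | 1 => 3
  | 2 => 2
  | l + 3 => if l < k then 1 else if l = k then 2 else 3

variable {k : ℕ}

theorem rem_rec (hk : 1 ≤ k) {l : ℕ} (hl : l < k + 3) :
    rem k (l + 2) = quot k (l + 1) * rem k (l + 1) - rem k l := by
  rcases l with _ | _ | _ | l <;> simp only [rem, quot] <;> (try split_ifs) <;> omega

theorem rem_nonneg (k l : ℕ) : 0 ≤ rem k l := by
  rcases l with _ | _ | _ | l <;> simp only [rem] <;> (try split_ifs) <;> omega

theorem rem_lt (hk : 1 ≤ k) {l : ℕ} (hl : l < k + 3) : rem k (l + 2) < rem k (l + 1) := by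
  rcases l with _ | _ | _ | l <;> simp only [rem] <;> (try split_ifs) <;> omega

theorem mult_rec (hk : 1 ≤ k) {l : ℕ} (hl : l < k + 3) :
    mult k (l + 2) = quot k (l + 1) * mult k (l + 1) - mult k l := by
  rcases l with _ | _ | _ | l <;> simp only [mult, quot] <;> (try split_ifs) <;> omega

end HJData.ThreeFour

open HJData.ThreeFour in
/-- For `n = 5 + 12k`, `k ≥ 1`, the Hirzebruch–Jung data of
`(3, 4, n)` has `L = k + 3` and multiplicity sequence
`4, 3, 2, 1, …, 1, 2, 3` (with `k` entries equal to `1`). -/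
theorem stmt11 (k : ℕ) (hk : 1 ≤ k) (hj : HJData 3 4 (5 + 12 * k)) :
    hj.L = k + 3 ∧ hj.μ 0 = 4 ∧ hj.μ 1 = 3 ∧ hj.μ 2 = 2 ∧
    (∀ l : ℕ, 3 ≤ l → l ≤ k + 2 → hj.μ l = 1) ∧
    hj.μ (k + 3) = 2 ∧ hj.μ (k + 4) = 3 := by
  have hr₁ : hj.r 1 = 9 * k + 3 :=
    hj.r_one_eq_of_dvd ⟨-(3 * k + 1), 1, by push_cast; ring⟩ (by omega) (by push_cast; omega)
      ⟨3, by push_cast; ring⟩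
  have hμ₁ : hj.μ 1 = 3 := hj.mu_one_eq_of_mul_eq (by omega) (by rw [hr₁]; push_cast; ring)
  obtain ⟨hL, hb⟩ := hj.L_eq_and_b_eq_of_chain (R := rem k) (B := quot k)
    (by simp only [rem]; push_cast; ring) (by rw [hr₁, rem])
    (fun _ hl => rem_rec hk hl) (fun l _ => rem_nonneg k (l + 2)) (fun _ hl => rem_lt hk hl)
    (by simp only [rem]; split_ifs <;> omega)
  have hμ := hj.mu_eq_of_rec hL hb (M := mult k) rfl (by rw [hμ₁, mult])
    (fun _ hl => mult_rec hk hl)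
  refine ⟨hL, ?_, hμ₁, ?_, fun l hl₃ hl => ?_, ?_, ?_⟩
  · exact hμ 0 (by omega)
  · exact hμ 2 (by omega)
  · obtain ⟨l, rfl⟩ : ∃ j, l = j + 3 := ⟨l - 3, by omega⟩
    rw [hμ _ (by omega), mult, if_pos (by omega)]
  · rw [hμ _ (by omega), mult, if_neg (by omega), if_pos rfl]
  · rw [hμ (k + 1 + 3) (by omega), mult, if_neg (by omega), if_neg (by omega)]
end

section
/- Let m1 = 2 and m2 = 3, and for an integer n ≥ 2 coprime to 6 let r, (b_l), (r_l), L and (μ_l) be the Hirzebruch–Jung data of (2,3,n), and for a field F of characteristic zero containing a primitive n-th root of unity ξ let Tr_σ(ξ) = Σ_{l=1}^{L} Σ_{k=1}^{μ_l} Tr_l^k(ξ) be defined via χ = ξ^{α_1} (α_1·2 ≡ 1 mod n) by: for 2 ≤ l ≤ L−1, Tr_l^k(ξ) = χ^{r_{l−2}(μ_l−k)}/(1−χ^{−r_{l−1}}) + χ^{−r_l(μ_l−k)+r_{l−1}μ_{l+1}}/(1−χ^{r_{l−1}}); Tr_1^k(ξ) = 1/(1−χ^{−r_0}) + χ^{−r_1(μ_1−k)+r_0·μ_2}/(1−χ^{r_0});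 Tr_L^k(ξ) = χ^{r_{L−2}(μ_L−k)}/(1−χ^{−r_{L−1}}) + 1/(1−χ^{r_{L−1}}). Then there exists N such that for all n ≥ N: (1) if n ≡ 1 (mod 6), the multiplicity sequence satisfies μ_0 = 3, μ_1 = 2, μ_l = 1 for 2 ≤ l ≤ L, μ_{L+1} = 2, and Tr_σ(ξ) = 2 + ξ^{α_3}, where α_3 is the inverse of 3 modulo n; (2) if n ≡ 5 (mod 6), the multiplicity sequence satisfies μ_0 = 3, μ_l = 1 for 1 ≤ l ≤ L, μ_{L+1} = 2, and Tr_σ(ξ) = 1. -/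
/-- The summand `Tr_l^k(ξ)` of the trace contribution of a tame cyclic quotient
singularity, written in terms of the Hirzebruch–Jung data `hj` and `χ = ξ^{α₁}`.
Recall the index shift: the paper's `r_j` is `hj.r (j+1)`. -/
noncomputable def TrTerm {m1 m2 n : ℕ} (hj : HJData m1 m2 n) {F : Type*} [Field F]
    (χ : F) (l k : ℕ) : F :=
  if l = 1 then
    1 / (1 - χ ^ (-(hj.r 1))) +
      χ ^ (-(hj.r 2) * (hj.μ 1 - (k : ℤ)) + hj.r 1 * hj.μ 2) / (1 - χ ^ (hj.r 1))
  else if l = hj.L then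
    χ ^ (hj.r (hj.L - 1) * (hj.μ hj.L - (k : ℤ))) / (1 - χ ^ (-(hj.r hj.L))) +
      1 / (1 - χ ^ (hj.r hj.L))
  else
    χ ^ (hj.r (l - 1) * (hj.μ l - (k : ℤ))) / (1 - χ ^ (-(hj.r l))) +
      χ ^ (-(hj.r (l + 1)) * (hj.μ l - (k : ℤ)) + hj.r l * hj.μ (l + 1)) /
        (1 - χ ^ (hj.r l))

/-- `Tr_σ(ξ) = Σ_{l=1}^{L} Σ_{k=1}^{μ_l} Tr_l^k(ξ)`. -/
noncomputable def TrSigma {m1 m2 n : ℕ} (hj : HJData m1 m2 n) {F : Type*} [Field F]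
    (χ : F) : F :=
  ∑ l ∈ Finset.Icc 1 hj.L, ∑ k ∈ Finset.Icc 1 (hj.μ l).toNat, TrTerm hj χ l k

/-!
For `n = 6t + 1` the remainders are `n, 4t, 2t - 1, 2t - 3, …, 3, 1, 0`, for `n = 6t + 5` they are
`n, 2t + 1, 2t - 1, …, 3, 1, 0`. Once two consecutive remainders are `2s + 3, 2s + 1` with
multiplicities `1, 1`, the recursion runs with `b = 2`, lowering the remainders by `2` and keeping
the multiplicities `1`, until the remainders `3, 1` force `b = 3`, hence `r_L = 0` and
`μ_{L+1} = 3 - 1 = 2`.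

For the trace, `1 / (1 - x⁻¹) = -x / (1 - x)`: each summand `Tr_l^{μ_l}` with `μ_{l+1} = 1`
vanishes and the last block contributes `1`. For `n = 6t + 1` the remaining summand `Tr_1^1` equals
`1 + χ^{2t+1}` because `χ^{2t+1} = χ^{-4t}`, and `χ^{2t+1} = ξ^{α₃}` because
`3 α₁ (2t + 1) ≡ 2 α₁ ≡ 1 (mod n)`.
-/

section FieldIdentities

variable {F : Type*} [Field F] {x : F}

theorem one_div_one_sub_inv (hx : x ≠ 0) : 1 / (1 - x⁻¹) = -(x / (1 - x)) := by
  have h : 1 - x⁻¹ = (x - 1) / x := by field_simp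
  rw [h, one_div_div, ← div_neg, neg_sub]

theorem one_div_one_sub_inv_add_one_div_one_sub (hx0 : x ≠ 0) (hx1 : x ≠ 1) :
    1 / (1 - x⁻¹) + 1 / (1 - x) = 1 := by
  rw [one_div_one_sub_inv hx0, ← neg_div, ← add_div, neg_add_eq_sub,
    div_self (sub_ne_zero.mpr hx1.symm)]

theorem one_div_one_sub_inv_add_inv_div_one_sub (hx0 : x ≠ 0) (hx1 : x ≠ 1) :
    1 / (1 - x⁻¹) + x⁻¹ / (1 - x) = 1 + x⁻¹ := by
  have h : 1 - x ≠ 0 := sub_ne_zero.mpr hx1.symm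
  rw [one_div_one_sub_inv hx0]
  field_simp
  ring

end FieldIdentities

namespace HJData

section General

variable {m1 m2 n : ℕ} (hj : HJData m1 m2 n)

theorem succ_le_L {l : ℕ} (hl : l ≤ hj.L) (hr : hj.r (l + 1) ≠ 0) : l + 1 ≤ hj.L := by
  rcases hl.lt_or_eq with hl | rfl
  · exact hl
  · exact absurd hj.r_top hr

theorem one_le_L : 1 ≤ hj.L :=
  hj.succ_le_L (Nat.zero_le _) hj.r_one_pos.ne'

theorem b_eq_of_bounds {l : ℕ} (hl : 1 ≤ l) (hlL : l ≤ hj.L) {c : ℤ}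
    (hlo : hj.r l * (c - 1) < hj.r (l - 1)) (hhi : hj.r (l - 1) ≤ hj.r l * c) : hj.b l = c := by
  have hr : (0 : ℚ) < hj.r l := by exact_mod_cast hj.r_pos l hl hlL
  rw [hj.b_def l hl hlL, Int.ceil_eq_iff, lt_div_iff₀ hr, div_le_iff₀ hr]
  constructor
  · exact_mod_cast (by linarith : (c - 1) * hj.r l < hj.r (l - 1))
  · exact_mod_cast (by linarith : hj.r (l - 1) ≤ c * hj.r l)

theorem r_succ_lt {l : ℕ} (hl : 1 ≤ l) (hlL : l ≤ hj.L) : hj.r (l + 1) < hj.r l := by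
  have hr : (0 : ℚ) < hj.r l := by exact_mod_cast hj.r_pos l hl hlL
  have hb : ((hj.b l - 1 : ℤ) : ℚ) < hj.r (l - 1) / hj.r l := by
    rw [hj.b_def l hl hlL]
    push_cast
    linarith [Int.ceil_lt_add_one ((hj.r (l - 1) : ℚ) / hj.r l)]
  rw [lt_div_iff₀ hr] at hb
  have hb' : (hj.b l - 1) * hj.r l < hj.r (l - 1) := by exact_mod_cast hb
  rw [hj.r_rec l hl hlL]
  linarith

theorem r_lt_n {l : ℕ} (hl : 1 ≤ l) (hlL : l ≤ hj.L) : hj.r l < n := by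
  induction l, hl using Nat.le_induction with
  | base => exact hj.r_one_lt
  | succ l hl ih => exact (hj.r_succ_lt hl (by omega)).trans (ih (by omega))

theorem r_one_eq (hcop : n.Coprime m2) {ρ : ℤ} (hρ0 : 0 < ρ) (hρn : ρ < n)
    (hρ : (n : ℤ) ∣ m1 + ρ * m2) : hj.r 1 = ρ := by
  have hdvd : (n : ℤ) ∣ (hj.r 1 - ρ) * m2 := by
    rw [show (hj.r 1 - ρ) * m2 = (m1 + hj.r 1 * m2) - (m1 + ρ * m2) by ring]
    exact dvd_sub hj.r_one_cong hρ
  have hdvd' := (Nat.isCoprime_iff_coprime.mpr hcop).dvd_of_dvd_mul_right hdvd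
  have h0 := hj.r_one_pos
  have h1 := hj.r_one_lt
  exact sub_eq_zero.mp
    (Int.eq_zero_of_abs_lt_dvd hdvd' (by rw [abs_lt]; constructor <;> linarith))

theorem r_mu_succ_of_bounds {l : ℕ} (hl : 1 ≤ l) (hlL : l ≤ hj.L) {c : ℤ}
    (hlo : hj.r l * (c - 1) < hj.r (l - 1)) (hhi : hj.r (l - 1) ≤ hj.r l * c) :
    hj.r (l + 1) = c * hj.r l - hj.r (l - 1) ∧ hj.μ (l + 1) = c * hj.μ l - hj.μ (l - 1) := by
  rw [hj.r_rec l hl hlL, hj.mu_rec l hl hlL, hj.b_eq_of_bounds hl hlL hlo hhi]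
  exact ⟨rfl, rfl⟩

theorem mu_tail_of_r_eq_odd (s j : ℕ) (hjL : j ≤ hj.L) (hr : hj.r j = 2 * s + 3)
    (hr' : hj.r (j + 1) = 2 * s + 1) (hμ : hj.μ j = 1) (hμ' : hj.μ (j + 1) = 1) :
    hj.L = j + 1 + s ∧ (∀ l, j ≤ l → l ≤ hj.L → hj.μ l = 1) ∧
      hj.μ (hj.L + 1) = 2 := by
  have hj1 : j + 1 ≤ hj.L := hj.succ_le_L hjL (by omega)
  induction s generalizing j with
  | zero =>
    obtain ⟨hr'', hμ''⟩ := hj.r_mu_succ_of_bounds (l := j + 1) (by omega) hj1 (c := 3)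
      (by rw [Nat.add_sub_cancel, hr, hr']; norm_num)
      (by rw [Nat.add_sub_cancel, hr, hr']; norm_num)
    simp only [Nat.add_sub_cancel, hr, hr', hμ, hμ'] at hr'' hμ''
    have hL : hj.L = j + 1 := by
      by_contra h
      have := hj.r_pos (j + 1 + 1) (by omega) (by omega)
      omega
    refine ⟨hL, fun l hl hlL ↦ ?_, by rw [hL]; linarith⟩
    obtain rfl | rfl : l = j ∨ l = j + 1 := by omega
    exacts [hμ, hμ']
  | succ s ih =>
    obtain ⟨hr'', hμ''⟩ := hj.r_mu_succ_of_bounds (l := j + 1) (by omega) hj1 (c := 2)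
      (by rw [Nat.add_sub_cancel, hr, hr']; push_cast; linarith)
      (by rw [Nat.add_sub_cancel, hr, hr']; push_cast; linarith)
    simp only [Nat.add_sub_cancel, hr, hr', hμ, hμ'] at hr'' hμ''
    obtain ⟨hL, hμs, hμL⟩ := ih (j + 1) hj1 (by rw [hr']; push_cast; ring)
      (by rw [hr'']; push_cast; ring) hμ' (by rw [hμ'']; norm_num)
      (hj.succ_le_L hj1 (by rw [hr'']; omega))
    refine ⟨by omega, fun l hl hlL ↦ ?_, hμL⟩
    rcases hl.eq_or_lt with rfl | hl
    exacts [hμ, hμs l hl hlL]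

section Trace

variable {F : Type*} [Field F] {χ : F}

theorem zpow_r_ne_one (hχ : IsPrimitiveRoot χ n) {l : ℕ} (hl : 1 ≤ l) (hlL : l ≤ hj.L) :
    χ ^ hj.r l ≠ 1 := by
  rw [Ne, hχ.zpow_eq_one_iff_dvd]
  exact fun h ↦ (hj.r_lt_n hl hlL).not_ge (Int.le_of_dvd (hj.r_pos l hl hlL) h)

theorem trTerm_eq_zero (hχ0 : χ ≠ 0) {l k : ℕ} (hlL : l < hj.L)
    (hk : (k : ℤ) = hj.μ l) (hμ : hj.μ (l + 1) = 1) : TrTerm hj χ l k = 0 := by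
  have hx0 : χ ^ hj.r l ≠ 0 := zpow_ne_zero _ hχ0
  unfold TrTerm
  split_ifs with h1 hL
  · subst h1
    rw [← hk, hμ, sub_self, mul_zero, zero_add, mul_one, zpow_neg, one_div_one_sub_inv hx0,
      neg_add_cancel]
  · omega
  · rw [← hk, sub_self, mul_zero, mul_zero, zero_add, hμ, mul_one, zpow_zero, zpow_neg,
      one_div_one_sub_inv hx0, neg_add_cancel]

theorem trTerm_L_one (hχ0 : χ ≠ 0) (hL : hj.L ≠ 1) (hμ : hj.μ hj.L = 1)
    (hx : χ ^ hj.r hj.L ≠ 1) : TrTerm hj χ hj.L 1 = 1 := by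
  rw [TrTerm, if_neg hL, if_pos rfl, hμ, Nat.cast_one, sub_self, mul_zero, zpow_zero, zpow_neg]
  exact one_div_one_sub_inv_add_one_div_one_sub (zpow_ne_zero _ hχ0) hx

theorem trSigma_eq_sum_first_add_one (hχ : IsPrimitiveRoot χ n) (hL : 2 ≤ hj.L)
    (hμ : ∀ l, 2 ≤ l → l ≤ hj.L → hj.μ l = 1) :
    TrSigma hj χ = ∑ k ∈ Finset.Icc 1 (hj.μ 1).toNat, TrTerm hj χ 1 k + 1 := by
  have hχ0 : χ ≠ 0 := hχ.ne_zero (by have := hj.r_one_pos; have := hj.r_one_lt; omega)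
  have inner : ∀ l, 2 ≤ l → l ≤ hj.L →
      ∑ k ∈ Finset.Icc 1 (hj.μ l).toNat, TrTerm hj χ l k = TrTerm hj χ l 1 := by
    intro l hl hlL
    rw [hμ l hl hlL, Int.toNat_one, Finset.Icc_self, Finset.sum_singleton]
  have hmid :
      ∑ l ∈ Finset.Ioo 1 hj.L, ∑ k ∈ Finset.Icc 1 (hj.μ l).toNat, TrTerm hj χ l k = 0 := by
    refine Finset.sum_eq_zero fun l hl ↦ ?_
    rw [Finset.mem_Ioo] at hl
    rw [inner l hl.1 hl.2.le]
    exact hj.trTerm_eq_zero hχ0 hl.2 (by simp [hμ l hl.1 hl.2.le])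
      (hμ _ (by omega) hl.2)
  rw [TrSigma, ← Finset.sum_Ioc_add_eq_sum_Icc hj.one_le_L,
    ← Finset.sum_Ioo_add_eq_sum_Ioc (by omega), hmid, inner _ hL le_rfl,
    hj.trTerm_L_one hχ0 (by omega) (hμ _ hL le_rfl)
    (hj.zpow_r_ne_one hχ (by omega) le_rfl)]
  ring

end Trace

end General

section TwoThree

variable {n : ℕ} (hj : HJData 2 3 n) {t : ℕ}

theorem start_of_eq_six_mul_add_one (ht : 1 ≤ t) (hn : n = 6 * t + 1) :
    hj.r 1 = 4 * t ∧ hj.μ 1 = 2 ∧ hj.r 2 = 2 * t - 1 ∧ hj.μ 2 = 1 := by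
  have hcop : n.Coprime 3 := by
    rw [hn, show 6 * t + 1 = 2 * t * 3 + 1 by ring, Nat.coprime_mul_right_add_left]
    exact Nat.coprime_one_left 3
  have hnZ : (n : ℤ) = 6 * t + 1 := by rw [hn]; push_cast; ring
  have hr1 : hj.r 1 = 4 * t :=
    hj.r_one_eq hcop (by omega) (by omega) ⟨2, by rw [hnZ]; push_cast; ring⟩
  have hμ1 : hj.μ 1 = 2 :=
    mul_left_cancel₀ (by omega : (n : ℤ) ≠ 0) (by rw [hj.mu_one, hr1, hnZ]; push_cast; ring)
  obtain ⟨hr2, hμ2⟩ := hj.r_mu_succ_of_bounds (l := 1) le_rfl hj.one_le_L (c := 2)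
    (by rw [hr1, Nat.sub_self, hj.r_zero, hnZ]; omega)
    (by rw [hr1, Nat.sub_self, hj.r_zero, hnZ]; omega)
  rw [Nat.sub_self, hj.r_zero, hnZ, hr1] at hr2
  rw [Nat.sub_self, hj.mu_zero, hμ1] at hμ2
  exact ⟨hr1, hμ1, by rw [hr2]; ring, by rw [hμ2]; norm_num⟩

theorem mu_of_eq_six_mul_add_one (ht : 2 ≤ t) (hn : n = 6 * t + 1) :
    hj.μ 1 = 2 ∧ 2 ≤ hj.L ∧ (∀ l, 2 ≤ l → l ≤ hj.L → hj.μ l = 1) ∧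
      hj.μ (hj.L + 1) = 2 := by
  obtain ⟨hr1, hμ1, hr2, hμ2⟩ := hj.start_of_eq_six_mul_add_one (by omega) hn
  have hL : 2 ≤ hj.L := hj.succ_le_L hj.one_le_L (by rw [hr2]; omega)
  obtain ⟨hr3, hμ3⟩ := hj.r_mu_succ_of_bounds (l := 2) (by omega) hL (c := 3)
    (by rw [hr1, hr2]; omega) (by rw [hr1, hr2]; omega)
  rw [show 2 - 1 = 1 from rfl, hr1, hr2] at hr3
  rw [show 2 - 1 = 1 from rfl, hμ1, hμ2] at hμ3
  obtain ⟨s, rfl⟩ : ∃ s, t = s + 2 := ⟨t - 2, by omega⟩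
  obtain ⟨-, hμ, hμL⟩ := hj.mu_tail_of_r_eq_odd s 2 hL (by rw [hr2]; push_cast; ring)
    (by rw [hr3]; push_cast; ring) hμ2 (by rw [hμ3]; norm_num)
  exact ⟨hμ1, hL, hμ, hμL⟩

theorem trSigma_of_eq_six_mul_add_one (ht : 2 ≤ t) (hn : n = 6 * t + 1) {F : Type*} [Field F]
    {χ : F} (hχ : IsPrimitiveRoot χ n) : TrSigma hj χ = 2 + χ ^ (2 * t + 1) := by
  obtain ⟨hr1, -, hr2, hμ2⟩ := hj.start_of_eq_six_mul_add_one (by omega) hn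
  obtain ⟨hμ1, hL, hμ, -⟩ := hj.mu_of_eq_six_mul_add_one ht hn
  have hχ0 : χ ≠ 0 := hχ.ne_zero (by omega)
  have hx1 : χ ^ (4 * t : ℤ) ≠ 1 := hr1 ▸ hj.zpow_r_ne_one hχ le_rfl hj.one_le_L
  have hinv : χ ^ (2 * t + 1) = (χ ^ (4 * t : ℤ))⁻¹ := by
    refine eq_inv_of_mul_eq_one_left ?_
    rw [← zpow_natCast, ← zpow_add₀ hχ0, ← hχ.pow_eq_one, ← zpow_natCast, hn]
    congr 1
    push_cast
    ring
  have hTr1 : TrTerm hj χ 1 1 = 1 + χ ^ (2 * t + 1) := by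
    rw [TrTerm, if_pos rfl, hr1, hr2, hμ1, hμ2, zpow_neg,
      show -(2 * (t : ℤ) - 1) * (2 - ((1 : ℕ) : ℤ)) + 4 * t * 1 = ((2 * t + 1 : ℕ) : ℤ) by
        push_cast; ring,
      zpow_natCast, hinv]
    exact one_div_one_sub_inv_add_inv_div_one_sub (zpow_ne_zero _ hχ0) hx1
  have hTr2 : TrTerm hj χ 1 2 = 0 :=
    hj.trTerm_eq_zero hχ0 (by omega) (by rw [hμ1]; rfl) hμ2
  rw [hj.trSigma_eq_sum_first_add_one hχ hL hμ, hμ1, show (2 : ℤ).toNat = 2 from rfl,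
    show Finset.Icc 1 2 = {1, 2} from rfl, Finset.sum_pair (by norm_num : (1 : ℕ) ≠ 2),
    hTr1, hTr2]
  ring

theorem start_of_eq_six_mul_add_five (ht : 1 ≤ t) (hn : n = 6 * t + 5) :
    hj.r 1 = 2 * t + 1 ∧ hj.μ 1 = 1 ∧ hj.r 2 = 2 * t - 1 ∧ hj.μ 2 = 1 := by
  have hcop : n.Coprime 3 := by
    rw [hn, show 6 * t + 5 = 2 * t * 3 + 5 by ring, Nat.coprime_mul_right_add_left]
    norm_num
  have hnZ : (n : ℤ) = 6 * t + 5 := by rw [hn]; push_cast; ring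
  have hr1 : hj.r 1 = 2 * t + 1 :=
    hj.r_one_eq hcop (by omega) (by omega) ⟨1, by rw [hnZ]; push_cast; ring⟩
  have hμ1 : hj.μ 1 = 1 :=
    mul_left_cancel₀ (by omega : (n : ℤ) ≠ 0) (by rw [hj.mu_one, hr1, hnZ]; push_cast; ring)
  obtain ⟨hr2, hμ2⟩ := hj.r_mu_succ_of_bounds (l := 1) le_rfl hj.one_le_L (c := 4)
    (by rw [hr1, Nat.sub_self, hj.r_zero, hnZ]; omega)
    (by rw [hr1, Nat.sub_self, hj.r_zero, hnZ]; omega)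
  rw [Nat.sub_self, hj.r_zero, hnZ, hr1] at hr2
  rw [Nat.sub_self, hj.mu_zero, hμ1] at hμ2
  exact ⟨hr1, hμ1, by rw [hr2]; ring, by rw [hμ2]; norm_num⟩

theorem mu_of_eq_six_mul_add_five (ht : 1 ≤ t) (hn : n = 6 * t + 5) :
    2 ≤ hj.L ∧ (∀ l, 1 ≤ l → l ≤ hj.L → hj.μ l = 1) ∧ hj.μ (hj.L + 1) = 2 := by
  obtain ⟨hr1, hμ1, hr2, hμ2⟩ := hj.start_of_eq_six_mul_add_five ht hn
  obtain ⟨s, rfl⟩ : ∃ s, t = s + 1 := ⟨t - 1, by omega⟩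
  obtain ⟨hL, hμ, hμL⟩ := hj.mu_tail_of_r_eq_odd s 1 hj.one_le_L
    (by rw [hr1]; push_cast; ring)
    (by rw [hr2]; push_cast; ring) hμ1 hμ2
  exact ⟨by omega, hμ, hμL⟩

theorem trSigma_of_eq_six_mul_add_five (ht : 1 ≤ t) (hn : n = 6 * t + 5) {F : Type*} [Field F]
    {χ : F} (hχ : IsPrimitiveRoot χ n) : TrSigma hj χ = 1 := by
  obtain ⟨hL, hμ, -⟩ := hj.mu_of_eq_six_mul_add_five ht hn
  have hχ0 : χ ≠ 0 := hχ.ne_zero (by omega)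
  rw [hj.trSigma_eq_sum_first_add_one hχ hL fun l hl ↦ hμ l (by omega), hμ 1 le_rfl (by omega),
    Int.toNat_one, Finset.Icc_self, Finset.sum_singleton,
    hj.trTerm_eq_zero hχ0 (by omega) (hμ 1 le_rfl (by omega)).symm (hμ 2 (by omega) hL),
    zero_add]

end TwoThree

end HJData

theorem modEq_inv_three_of_six_mul_add_one {t α1 α3 : ℕ} (hα1 : α1 * 2 ≡ 1 [MOD 6 * t + 1])
    (hα3 : α3 * 3 ≡ 1 [MOD 6 * t + 1]) : α1 * (2 * t + 1) ≡ α3 [MOD 6 * t + 1] := by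
  rw [← ZMod.natCast_eq_natCast_iff] at hα1 hα3 ⊢
  have hn : ((6 * t + 1 : ℕ) : ZMod (6 * t + 1)) = 0 := ZMod.natCast_self _
  push_cast at hα1 hα3 hn ⊢
  linear_combination (-(α1 : ZMod (6 * t + 1)) * (2 * t + 1)) * hα3
    + (α3 : ZMod (6 * t + 1)) * hα1 + (α1 : ZMod (6 * t + 1)) * α3 * hn

/-- Explicit multiplicity sequences and trace contributions
for the tame cyclic quotient singularities `(2, 3, n)` with `n` large and
coprime to `6`. -/
theorem stmt12 :
    ∃ N : ℤ, ∀ n : ℕ, N ≤ (n : ℤ) → 2 ≤ n → Nat.Coprime n 6 →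
      ∀ hj : HJData 2 3 n,
        ∀ (F : Type) [Field F] [CharZero F] (ξ : F), IsPrimitiveRoot ξ n →
          ∀ α1 α3 : ℕ, α1 * 2 ≡ 1 [MOD n] → α3 * 3 ≡ 1 [MOD n] →
            (n % 6 = 1 →
              hj.μ 0 = 3 ∧ hj.μ 1 = 2 ∧
              (∀ l : ℕ, 2 ≤ l → l ≤ hj.L → hj.μ l = 1) ∧
              hj.μ (hj.L + 1) = 2 ∧
              TrSigma hj (ξ ^ α1) = 2 + ξ ^ α3) ∧
            (n % 6 = 5 →
              hj.μ 0 = 3 ∧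
              (∀ l : ℕ, 1 ≤ l → l ≤ hj.L → hj.μ l = 1) ∧
              hj.μ (hj.L + 1) = 2 ∧
              TrSigma hj (ξ ^ α1) = 1) := by
  refine ⟨13, fun n hN _ _ hj F _ _ ξ hξ α1 α3 hα1 hα3 ↦ ?_⟩
  have hχ : IsPrimitiveRoot (ξ ^ α1) n :=
    hξ.pow_of_coprime α1 (Nat.coprime_of_mul_modEq_one 2 hα1)
  have hμ0 : hj.μ 0 = 3 := hj.mu_zero
  refine ⟨fun hmod ↦ ?_, fun hmod ↦ ?_⟩
  · obtain ⟨t, rfl⟩ : ∃ t, n = 6 * t + 1 := ⟨n / 6, by omega⟩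
    obtain ⟨hμ1, -, hμ, hμL⟩ := hj.mu_of_eq_six_mul_add_one (by omega) rfl
    have hα : ξ ^ (α1 * (2 * t + 1)) = ξ ^ α3 :=
      (hξ.isOfFinOrder (by omega)).pow_eq_pow_iff_modEq.mpr
        (hξ.eq_orderOf ▸ modEq_inv_three_of_six_mul_add_one hα1 hα3)
    refine ⟨hμ0, hμ1, hμ, hμL, ?_⟩
    rw [hj.trSigma_of_eq_six_mul_add_one (by omega) rfl hχ, ← pow_mul, hα]
  · obtain ⟨t, rfl⟩ : ∃ t, n = 6 * t + 5 := ⟨n / 6, by omega⟩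
    obtain ⟨-, hμ, hμL⟩ := hj.mu_of_eq_six_mul_add_five (by omega) rfl
    exact ⟨hμ0, hμ, hμL, hj.trSigma_of_eq_six_mul_add_five (by omega) rfl hχ⟩
end
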